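/- Consistency with the Cosserat flat-shell Γ-limit: let μ > 0, μ_c > 0 and λ ∈ ℝ with 2μ + λ > 0. Let R ∈ SO(3) with columns R₁, R₂, R₃, let a, b ∈ ℝ³, let F ∈ ℝ^{3×3} be the matrix with columns (a, b, 0), and set E = Rᵀ F − 1₃ + e₃⊗e₃ (so E e₃ = 0, where e₃ = (0,0,1)). Let G ∈ ℝ^{2×2} have entries G₁₁ = ⟨R₁,a⟩, G₁₂ = ⟨R₁,b⟩, G₂₁ = ⟨R₂,a⟩, G₂₂ = ⟨R₂,b⟩, and let 1₂ be the 2×2 identity. Then μ‖sym E∥‖² + μ_c‖skew E∥‖² + (λμ/(λ + 2μ))·(tr E)² + (2μμ_c/(μ + μ_c))·‖Eᵀe₃‖² = μ‖sym(G − 1₂)‖² + μ_c‖skew(G − 1₂)‖² + (λμ/(λ + 2μ))·(tr(G − 1₂))² + (2μμ_c/(μ + μ_c))·(⟨R₃,a⟩² + ⟨R₃,b⟩²), where E∥ = (1₃ − e₃⊗e₃)E. -/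
import Mathlib


open Matrix

noncomputable section

/-- Squared Frobenius norm `‖X‖² = tr (X Xᵀ)` (any square size). -/
def normSq {m : ℕ} (X : Matrix (Fin m) (Fin m) ℝ) : ℝ := Matrix.trace (X * Xᵀ)

/-- Squared Euclidean norm on ℝ³. -/
def vnormSq (v : Fin 3 → ℝ) : ℝ := ∑ i, v i ^ 2

/-- Euclidean scalar product on ℝ³. -/
def vdot (u v : Fin 3 → ℝ) : ℝ := ∑ i, u i * v i

/-- Symmetric part (any square size). -/
def symPart {m : ℕ} (X : Matrix (Fin m) (Fin m) ℝ) : Matrix (Fin m) (Fin m) ℝ :=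
  ((1 : ℝ)/2) • (X + Xᵀ)

/-- Skew-symmetric part (any square size). -/
def skewPart {m : ℕ} (X : Matrix (Fin m) (Fin m) ℝ) : Matrix (Fin m) (Fin m) ℝ :=
  ((1 : ℝ)/2) • (X - Xᵀ)

/-- Rank-one matrix `v ⊗ n = v nᵀ`. -/
def outer (v n : Fin 3 → ℝ) : Matrix (Fin 3) (Fin 3) ℝ := Matrix.vecMulVec v n

/-- The third coordinate unit vector `e₃ = (0,0,1)`. -/
def e₃ : Fin 3 → ℝ := ![0, 0, 1]


lemma normSq_eq {m : ℕ} (X : Matrix (Fin m) (Fin m) ℝ) :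
    normSq X = ∑ i, ∑ j, (X i j)^2 := by
  simp [normSq, Matrix.trace, Matrix.mul_apply, Matrix.transpose_apply, sq, Matrix.diag]

lemma nsym2 (p q r s : ℝ) :
    normSq (symPart !![p, q; r, s]) = p^2 + s^2 + (q + r)^2/2 := by
  simp [normSq_eq, symPart, Fin.sum_univ_two, Matrix.transpose_apply, Matrix.vecHead, Matrix.vecTail]
  ring

lemma nskew2 (p q r s : ℝ) :
    normSq (skewPart !![p, q; r, s]) = (q - r)^2/2 := by
  simp [normSq_eq, skewPart, Fin.sum_univ_two, Matrix.transpose_apply, Matrix.vecHead, Matrix.vecTail]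
  ring

lemma nsym3 (p q r s : ℝ) :
    normSq (symPart !![p, q, 0; r, s, 0; (0:ℝ), 0, 0]) = p^2 + s^2 + (q + r)^2/2 := by
  simp [normSq_eq, symPart, Fin.sum_univ_three, Matrix.transpose_apply,
    Matrix.vecHead, Matrix.vecTail]
  ring

lemma nskew3 (p q r s : ℝ) :
    normSq (skewPart !![p, q, 0; r, s, 0; (0:ℝ), 0, 0]) = (q - r)^2/2 := by
  simp [normSq_eq, skewPart, Fin.sum_univ_three, Matrix.transpose_apply,
    Matrix.vecHead, Matrix.vecTail]
  ring

theorem flat_shell_gamma_limit_consistency (μ μc lam : ℝ)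
    (hμ : 0 < μ) (hμc : 0 < μc) (hlam : 0 < 2*μ + lam)
    (R : Matrix (Fin 3) (Fin 3) ℝ) (hR : Rᵀ * R = 1) (hdet : R.det = 1)
    (a b : Fin 3 → ℝ)
    (F : Matrix (Fin 3) (Fin 3) ℝ) (hF : F = Matrix.of fun i j => ![a i, b i, (0 : ℝ)] j)
    (E : Matrix (Fin 3) (Fin 3) ℝ) (hE : E = Rᵀ * F - 1 + outer e₃ e₃)
    (G : Matrix (Fin 2) (Fin 2) ℝ)
    (hG : G = !![vdot (fun k => R k 0) a, vdot (fun k => R k 0) b;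
                 vdot (fun k => R k 1) a, vdot (fun k => R k 1) b]) :
    μ * normSq (symPart ((1 - outer e₃ e₃) * E)) + μc * normSq (skewPart ((1 - outer e₃ e₃) * E))
      + (lam * μ/(lam + 2*μ)) * (Matrix.trace E)^2
      + (2*μ*μc/(μ + μc)) * vnormSq (Eᵀ.mulVec e₃)
    = μ * normSq (symPart (G - 1)) + μc * normSq (skewPart (G - 1))
      + (lam * μ/(lam + 2*μ)) * (Matrix.trace (G - 1))^2
      + (2*μ*μc/(μ + μc)) * ((vdot (fun k => R k 2) a)^2 + (vdot (fun k => R k 2) b)^2) := by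
  set g11 := vdot (fun k => R k 0) a
  set g12 := vdot (fun k => R k 0) b
  set g21 := vdot (fun k => R k 1) a
  set g22 := vdot (fun k => R k 1) b
  set g31 := vdot (fun k => R k 2) a
  set g32 := vdot (fun k => R k 2) b
  have hE' : E = !![g11 - 1, g12, 0; g21, g22 - 1, 0; g31, g32, 0] := by
    subst hE hF
    ext i j
    fin_cases i <;> fin_cases j <;>
      simp [Matrix.mul_apply, Matrix.add_apply, Matrix.sub_apply, Matrix.one_apply,
        outer, e₃, Matrix.vecMulVec_apply, Fin.sum_univ_three, vdot, g11, g12, g21, g22,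
        g31, g32, Matrix.vecHead, Matrix.vecTail] <;> ring
  have hP : (1 - outer e₃ e₃) * E = !![g11 - 1, g12, 0; g21, g22 - 1, 0; (0:ℝ), 0, 0] := by
    rw [hE']
    ext i j
    fin_cases i <;> fin_cases j <;>
      simp [Matrix.mul_apply, Matrix.sub_apply, Matrix.one_apply, outer, e₃,
        Matrix.vecMulVec_apply, Fin.sum_univ_three, Matrix.vecHead, Matrix.vecTail]
  have hG' : G - 1 = !![g11 - 1, g12; g21, g22 - 1] := by
    rw [hG]; ext i j
    fin_cases i <;> fin_cases j <;> simp [Matrix.sub_apply, Matrix.one_apply, Matrix.vecHead, Matrix.vecTail]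
  have htr : Matrix.trace E = (g11 - 1) + (g22 - 1) := by
    rw [hE', Matrix.trace_fin_three_of]; ring
  have htr2 : Matrix.trace (G - 1) = (g11 - 1) + (g22 - 1) := by
    rw [hG', Matrix.trace_fin_two_of]
  have hv : vnormSq (Eᵀ.mulVec e₃) = g31^2 + g32^2 := by
    rw [hE']
    simp [vnormSq, Matrix.mulVec, dotProduct, e₃, Fin.sum_univ_three,
      Matrix.transpose_apply]
  rw [htr2, hP, hG', htr, hv, nsym3, nskew3, nsym2, nskew2]

end
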